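/- arXiv:1805.02570 — 12 statements merged into one kernel-verified Lean document; each statement's English description precedes it below -/
import Mathlib

section
/- Let r and r' be two distinct points on the x-axis and let p be a point NOT lying on the x-axis, and let p' = (p₁, −p₂) be the mirror image of p across the x-axis. Then the circles C_p(r) and C_p(r') intersect exactly at p and p', i.e. C_p(r) ∩ C_p(r') = {p, p'}, and the line segment joining p and p' is contained in both closed disks D_p(r) and D_p(r'). -/
lemma dist_two (x y : EuclideanSpace ℝ (Fin 2)) :
    dist x y = Real.sqrt ((x 0 - y 0)^2 + (x 1 - y 1)^2) := by
  rw [EuclideanSpace.dist_eq, Fin.sum_univ_two]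
  simp [Real.dist_eq, sq_abs]

lemma sqnn (a b : ℝ) : (0:ℝ) ≤ a^2 + b^2 := by positivity

lemma dist_eq_iff (x y a b : EuclideanSpace ℝ (Fin 2)) :
    dist x y = dist a b ↔
      (x 0 - y 0)^2 + (x 1 - y 1)^2 = (a 0 - b 0)^2 + (a 1 - b 1)^2 := by
  rw [dist_two, dist_two, Real.sqrt_inj (sqnn _ _) (sqnn _ _)]

lemma dist_le_iff' (x y a b : EuclideanSpace ℝ (Fin 2)) :
    dist x y ≤ dist a b ↔
      (x 0 - y 0)^2 + (x 1 - y 1)^2 ≤ (a 0 - b 0)^2 + (a 1 - b 1)^2 := by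
  rw [dist_two, dist_two, Real.sqrt_le_sqrt_iff (sqnn _ _)]

/-- Lemma 1(i), second case: if `r`, `r'` are distinct points on the x-axis and
`p` does not lie on the x-axis, with `p'` the mirror image of `p` across the
x-axis, then the circles centered at `r` and `r'` through `p` intersect exactly
at `p` and `p'`, and the segment `[p, p']` lies in both closed disks. -/
theorem circles_through_point_off_axis_inter_eq_pair
    (r r' p p' : EuclideanSpace ℝ (Fin 2))
    (hr : r 1 = 0) (hr' : r' 1 = 0) (hrr' : r ≠ r') (hp : p 1 ≠ 0)
    (hp'0 : p' 0 = p 0) (hp'1 : p' 1 = -(p 1)) :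
    Metric.sphere r (dist r p) ∩ Metric.sphere r' (dist r' p) = {p, p'} ∧
    segment ℝ p p' ⊆ Metric.closedBall r (dist r p) ∧
    segment ℝ p p' ⊆ Metric.closedBall r' (dist r' p) := by
  have hr0 : r 0 ≠ r' 0 := by
    intro h
    apply hrr'
    ext i
    fin_cases i <;> simp [h, hr, hr']
  constructor
  · ext x
    simp only [Set.mem_inter_iff, Metric.mem_sphere, Set.mem_insert_iff,
      Set.mem_singleton_iff]
    rw [dist_eq_iff, dist_eq_iff]
    constructor
    · rintro ⟨h1, h2⟩
      rw [hr] at h1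
      rw [hr'] at h2
      have key : (x 0 - p 0) * (r' 0 - r 0) = 0 := by linear_combination (h1 - h2)/2
      have hx0 : x 0 = p 0 := by
        rcases mul_eq_zero.mp key with h | h
        · linarith [h]
        · exact absurd (by linarith) hr0
      have hsq : (x 1)^2 = (p 1)^2 := by
        rw [hx0] at h1
        linear_combination h1
      rcases sq_eq_sq_iff_eq_or_eq_neg.mp hsq with h | h
      · left; ext i; fin_cases i <;> simp [hx0, h]
      · right; ext i; fin_cases i <;> simp [hx0, hp'0, hp'1, h]
    · rintro (rfl | rfl)
      · exact ⟨by ring, by ring⟩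
      · constructor
        · rw [hp'0, hp'1, hr]; ring
        · rw [hp'0, hp'1, hr']; ring
  · have key : ∀ c : EuclideanSpace ℝ (Fin 2), c 1 = 0 →
        segment ℝ p p' ⊆ Metric.closedBall c (dist c p) := by
      intro c hc x hx
      rw [segment_eq_image'] at hx
      obtain ⟨t, ht, rfl⟩ := hx
      dsimp only
      rw [Metric.mem_closedBall, dist_le_iff']
      have h0 : (p + t • (p' - p)) 0 = p 0 := by
        simp [PiLp.add_apply, PiLp.smul_apply, PiLp.sub_apply, hp'0]
      have h1 : (p + t • (p' - p)) 1 = (1 - 2*t) * p 1 := by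
        simp only [PiLp.add_apply, PiLp.smul_apply, PiLp.sub_apply, hp'1, smul_eq_mul]
        ring
      rw [h0, h1, hc]
      have h2 : (1 - 2*t)^2 ≤ 1 := by nlinarith [ht.1, ht.2]
      nlinarith [sq_nonneg (p 1), h2]
    exact ⟨key r hr, key r' hr'⟩
end

section
/- Let r be a point on the x-axis and p a point of the plane. For every point s with s₁ < p₁ (i.e. s ∈ H_p^L) satisfying dist(r,s) < dist(r,p) (i.e. s lies in the interior of H_p^L ∩ D_p(r)), there exists a unique point c on the x-axis with dist(c,p) = dist(c,s); moreover this c satisfies c₁ > r₁, i.e. the center of the unique circle centered on the x-axis passing through p and s lies strictly to the right of r. -/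
/-!
Along a line `x + t • v` the difference `dist · p ^ 2 - dist · s ^ 2` is affine in `t` with slope
`-2 ⟪v, p - s⟫`, so when `v` is not orthogonal to `p - s` it has exactly one zero. For the x-axis
through `r` and `v = e₀` the slope is `-2 (p₀ - s₀) < 0`, while the value at `r` is positive since
`s` is closer to `r` than `p`; hence the zero lies at some `t > 0`, to the right of `r`.
-/

open RealInnerProductSpace

section InnerProductSpace

variable {E : Type*} [NormedAddCommGroup E] [InnerProductSpace ℝ E]

theorem dist_add_smul_sq_sub_dist_add_smul_sq (x v p s : E) (t : ℝ) :
    dist (x + t • v) p ^ 2 - dist (x + t • v) s ^ 2 =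
      dist x p ^ 2 - dist x s ^ 2 - 2 * t * ⟪v, p - s⟫ := by
  have hp : x + t • v - p = (x - p) + t • v := by abel
  have hs : x + t • v - s = (x - s) + t • v := by abel
  have hps : p - s = (x - s) - (x - p) := by abel
  simp only [dist_eq_norm, hp, hs, norm_add_sq_real, inner_smul_right, hps, inner_sub_right,
    real_inner_comm v]
  ring

theorem dist_add_smul_eq_dist_add_smul_iff {x v p s : E} (hv : ⟪v, p - s⟫ ≠ 0) (t : ℝ) :
    dist (x + t • v) p = dist (x + t • v) s ↔
      t = (dist x p ^ 2 - dist x s ^ 2) / (2 * ⟪v, p - s⟫) := by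
  rw [← sq_eq_sq₀ dist_nonneg dist_nonneg, ← sub_eq_zero,
    dist_add_smul_sq_sub_dist_add_smul_sq, eq_div_iff (mul_ne_zero two_ne_zero hv)]
  constructor <;> intro h <;> linarith

end InnerProductSpace

theorem EuclideanSpace.eq_add_smul_single_zero_of_apply_one_eq {p q : EuclideanSpace ℝ (Fin 2)}
    (h : p 1 = q 1) : p = q + (p 0 - q 0) • EuclideanSpace.single 0 1 := by
  ext i
  fin_cases i <;> simp [h]

/-- Lemma 1(ii), first item: for a point `s` strictly to the left of `p`
lying in the interior of the disk centered at `r` (on the x-axis) through `p`,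
there is a unique point `c` on the x-axis equidistant from `p` and `s`, and it
lies strictly to the right of `r`. -/
theorem unique_center_left_halfplane_inside_disk
    (r p s : EuclideanSpace ℝ (Fin 2))
    (hr : r 1 = 0) (hs : s 0 < p 0) (hsd : dist r s < dist r p) :
    ∃ c : EuclideanSpace ℝ (Fin 2),
      (c 1 = 0 ∧ dist c p = dist c s ∧ r 0 < c 0) ∧
      ∀ c' : EuclideanSpace ℝ (Fin 2),
        c' 1 = 0 → dist c' p = dist c' s → c' = c := by
  set e : EuclideanSpace ℝ (Fin 2) := EuclideanSpace.single 0 1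
  have he : ⟪e, p - s⟫ = p 0 - s 0 := by simp [e, EuclideanSpace.inner_single_left]
  have hv : ⟪e, p - s⟫ ≠ 0 := by rw [he]; linarith
  set t := (dist r p ^ 2 - dist r s ^ 2) / (2 * ⟪e, p - s⟫)
  have ht : 0 < t := by
    have := pow_lt_pow_left₀ hsd dist_nonneg two_ne_zero
    exact div_pos (by linarith) (by linarith)
  refine ⟨r + t • e, ⟨by simp [e, hr], (dist_add_smul_eq_dist_add_smul_iff hv t).2 rfl,
    by simpa [e] using ht⟩, fun c' hc' hdist => ?_⟩
  have hc' := EuclideanSpace.eq_add_smul_single_zero_of_apply_one_eq (hc'.trans hr.symm)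
  rw [hc'] at hdist ⊢
  rw [(dist_add_smul_eq_dist_add_smul_iff hv _).1 hdist]
end

section
/- Let r be a point on the x-axis and p a point of the plane. For every point s' with s'₁ > p₁ (i.e. s' ∈ H_p^R) satisfying dist(r,s') < dist(r,p) (i.e. s' lies in the interior of H_p^R ∩ D_p(r)), there exists a unique point c on the x-axis with dist(c,p) = dist(c,s'); moreover this c satisfies c₁ < r₁, i.e. the center of the unique circle centered on the x-axis passing through p and s' lies strictly to the left of r. -/
/-!
Set `g x := dist x p ^ 2 - dist x s' ^ 2`. Along the x-axis `g` is affine with slope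
`2 (s'₁ - p₁) > 0`, and `g r > 0` because `s'` is closer to `r` than `p` is. Hence `g` has
exactly one zero on the x-axis, and it lies to the left of `r`.
-/

theorem dist_sq_sub_dist_sq_eq_add_inner {E : Type*} [NormedAddCommGroup E]
    [InnerProductSpace ℝ E] (x y p s : E) :
    dist x p ^ 2 - dist x s ^ 2 = dist y p ^ 2 - dist y s ^ 2 + 2 * inner ℝ (x - y) (s - p) := by
  simp only [dist_eq_norm, norm_sub_sq_real, inner_sub_left, inner_sub_right]
  ring

theorem EuclideanSpace.dist_sq_sub_dist_sq_eq_of_apply_one_eq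
    {x y : EuclideanSpace ℝ (Fin 2)} (p s : EuclideanSpace ℝ (Fin 2)) (h : x 1 = y 1) :
    dist x p ^ 2 - dist x s ^ 2 =
      dist y p ^ 2 - dist y s ^ 2 + 2 * (x 0 - y 0) * (s 0 - p 0) := by
  rw [dist_sq_sub_dist_sq_eq_add_inner x y, PiLp.inner_apply, Fin.sum_univ_two]
  simp [h]
  ring

theorem EuclideanSpace.eq_of_apply_eq_of_apply_one_eq {x y : EuclideanSpace ℝ (Fin 2)}
    (h₀ : x 0 = y 0) (h₁ : x 1 = y 1) : x = y := by
  ext i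
  fin_cases i
  exacts [h₀, h₁]

/-- Lemma 1(ii), third item: for a point `s'` strictly to the right of `p`
lying in the interior of the disk centered at `r` (on the x-axis) through `p`,
there is a unique point `c` on the x-axis equidistant from `p` and `s'`, and it
lies strictly to the left of `r`. -/
theorem unique_center_right_halfplane_inside_disk
    (r p s' : EuclideanSpace ℝ (Fin 2))
    (hs : p 0 < s' 0) (hr : r 1 = 0) (hsd : dist r s' < dist r p) :
    ∃ c : EuclideanSpace ℝ (Fin 2),
      (c 1 = 0 ∧ dist c p = dist c s' ∧ c 0 < r 0) ∧
      ∀ c' : EuclideanSpace ℝ (Fin 2),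
        c' 1 = 0 → dist c' p = dist c' s' → c' = c := by
  have hslope : 0 < 2 * (s' 0 - p 0) := by linarith
  have hequidist_iff (x : EuclideanSpace ℝ (Fin 2)) :
      dist x p = dist x s' ↔ dist x p ^ 2 - dist x s' ^ 2 = 0 := by
    rw [sub_eq_zero, sq_eq_sq₀ dist_nonneg dist_nonneg]
  have hgr : 0 < dist r p ^ 2 - dist r s' ^ 2 :=
    sub_pos.2 (pow_lt_pow_left₀ hsd dist_nonneg two_ne_zero)
  set t := (dist r p ^ 2 - dist r s' ^ 2) / (2 * (s' 0 - p 0))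
  set c : EuclideanSpace ℝ (Fin 2) := !₂[r 0 - t, 0]
  have hc₀ : c 0 = r 0 - t := rfl
  have hc₁ : c 1 = 0 := rfl
  have hgc : dist c p ^ 2 - dist c s' ^ 2 = 0 := by
    rw [EuclideanSpace.dist_sq_sub_dist_sq_eq_of_apply_one_eq p s' (hc₁.trans hr.symm), hc₀]
    linear_combination (-1 : ℝ) * div_mul_cancel₀ (dist r p ^ 2 - dist r s' ^ 2) hslope.ne'
  refine ⟨c, ⟨hc₁, (hequidist_iff c).2 hgc, by linarith [div_pos hgr hslope]⟩, fun c' hc'₁ hc' => ?_⟩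
  have hgc' := (hequidist_iff c').1 hc'
  rw [EuclideanSpace.dist_sq_sub_dist_sq_eq_of_apply_one_eq p s' (hc'₁.trans hc₁.symm), hgc]
    at hgc'
  have hx : c' 0 = c 0 := by nlinarith
  exact EuclideanSpace.eq_of_apply_eq_of_apply_one_eq hx (hc'₁.trans hc₁.symm)
end

section
/- Let r be a point on the x-axis and p a point of the plane. For every point t' with t'₁ > p₁ (i.e. t' ∈ H_p^R) satisfying dist(r,t') > dist(r,p) (i.e. t' ∈ H_p^R − D_p(r)), there exists a unique point c on the x-axis with dist(c,p) = dist(c,t'); moreover this c satisfies c₁ > r₁, i.e. the center of the unique circle centered on the x-axis passing through p and t' lies strictly to the right of r. -/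
/-!
For `c` on the x-axis, `dist c t ^ 2 - dist c p ^ 2` is an affine function of `c 0` with slope
`-2 (t 0 - p 0)`. When `p 0 < t 0` it is strictly decreasing, so it has exactly one zero `b`,
the equidistant center. It is positive at `r` because `t'` lies outside the disk, so `r 0 < b`.
-/

namespace EuclideanSpace

lemma dist_sq_fin_two (x y : EuclideanSpace ℝ (Fin 2)) :
    dist x y ^ 2 = (x 0 - y 0) ^ 2 + (x 1 - y 1) ^ 2 := by
  rw [EuclideanSpace.dist_eq, Real.sq_sqrt (by positivity)]
  simp [Fin.sum_univ_two, Real.dist_eq, sq_abs]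

end EuclideanSpace

open EuclideanSpace

/-- The abscissa of the point of the x-axis equidistant from `p` and `t`
(junk when `p 0 = t 0`). -/
noncomputable def axisBisector (p t : EuclideanSpace ℝ (Fin 2)) : ℝ :=
  (t 0 ^ 2 + t 1 ^ 2 - p 0 ^ 2 - p 1 ^ 2) / (2 * (t 0 - p 0))

section

variable {c p t : EuclideanSpace ℝ (Fin 2)}

lemma dist_sq_sub_dist_sq_of_snd_eq_zero (hc : c 1 = 0) (hpt : p 0 ≠ t 0) :
    dist c t ^ 2 - dist c p ^ 2 = 2 * (t 0 - p 0) * (axisBisector p t - c 0) := by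
  have hden : t 0 - p 0 ≠ 0 := sub_ne_zero.mpr hpt.symm
  rw [dist_sq_fin_two, dist_sq_fin_two, hc, axisBisector]
  field_simp
  ring

lemma dist_eq_dist_iff_of_snd_eq_zero (hc : c 1 = 0) (hpt : p 0 ≠ t 0) :
    dist c p = dist c t ↔ c 0 = axisBisector p t := by
  have hden : 2 * (t 0 - p 0) ≠ 0 := mul_ne_zero two_ne_zero (sub_ne_zero.mpr hpt.symm)
  rw [← sq_eq_sq₀ dist_nonneg dist_nonneg, eq_comm, ← sub_eq_zero,
    dist_sq_sub_dist_sq_of_snd_eq_zero hc hpt, mul_eq_zero, or_iff_right hden, sub_eq_zero,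
    eq_comm]

lemma lt_axisBisector_of_dist_lt (hc : c 1 = 0) (hpt : p 0 < t 0)
    (hd : dist c p < dist c t) : c 0 < axisBisector p t := by
  have hsq : 0 < dist c t ^ 2 - dist c p ^ 2 :=
    sub_pos.mpr ((sq_lt_sq₀ dist_nonneg dist_nonneg).mpr hd)
  rw [dist_sq_sub_dist_sq_of_snd_eq_zero hc hpt.ne] at hsq
  exact sub_pos.mp (pos_of_mul_pos_right hsq (by linarith))

end

/-- Lemma 1(ii), fourth item: for a point `t'` strictly to the right of `p`
lying outside the closed disk centered at `r` (on the x-axis) through `p`,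
there is a unique point `c` on the x-axis equidistant from `p` and `t'`, and it
lies strictly to the right of `r`. -/
theorem unique_center_right_halfplane_outside_disk
    (r p t' : EuclideanSpace ℝ (Fin 2))
    (ht : p 0 < t' 0) (hr : r 1 = 0) (htd : dist r p < dist r t') :
    ∃ c : EuclideanSpace ℝ (Fin 2),
      (c 1 = 0 ∧ dist c p = dist c t' ∧ r 0 < c 0) ∧
      ∀ c' : EuclideanSpace ℝ (Fin 2),
        c' 1 = 0 → dist c' p = dist c' t' → c' = c := by
  set c : EuclideanSpace ℝ (Fin 2) := !₂[axisBisector p t', 0]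
  have hc : c 1 = 0 := rfl
  refine ⟨c, ⟨hc, (dist_eq_dist_iff_of_snd_eq_zero hc ht.ne).mpr rfl,
    lt_axisBisector_of_dist_lt hr ht htd⟩, fun c' hc' hdist => ?_⟩
  have hc'0 := (dist_eq_dist_iff_of_snd_eq_zero hc' ht.ne).mp hdist
  ext i
  fin_cases i
  · exact hc'0
  · exact hc'
end

section
/- Let a and b be two distinct points on the x-axis and let p be any point of the plane. Then the union of all circles C_p(r), taken over all points r of the closed line segment from a to b, equals the closure of the symmetric difference D_p(a) △ D_p(b) of the two closed disks D_p(a) and D_p(b); that is, ⋃_{r ∈ [a,b]} C_p(r) = closure((D_p(a) \ D_p(b)) ∪ (D_p(b) \ D_p(a))). -/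
/-!
A point `x` lies on the circle `C_p(r)` iff the power `dist x r ^ 2 - dist r p ^ 2` vanishes, and
this power is affine in the centre `r`. So `x` lies on some `C_p(r)` with `r ∈ [a, b]` iff its
powers with respect to `C_p(a)` and `C_p(b)` have opposite signs (weakly), i.e. iff `x` lies in
`(D_p(a) \ int D_p(b)) ∪ (D_p(b) \ int D_p(a))`; this closed set contains the symmetric
difference. Conversely, a point of this set that lies in the interior of one disk and on the
boundary of the other is a limit of points outside the second disk. The remaining points lie on
both circles; moving such a point along one of the two circles in the right direction (this is
where the plane is needed, via a right-angle rotation) leaves the other disk, unless `x` is the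
point of `C_p(a)` farthest from `b` and at the same time the point of `C_p(b)` farthest from `a`,
which is impossible for `a ≠ b`.
-/

open Metric Set Filter Topology Module
open scoped RealInnerProductSpace EuclideanSpace

section MetricSpace

variable {X : Type*} [PseudoMetricSpace X]

lemma closure_symmDiff_closedBall_subset (a b : X) (ra rb : ℝ) :
    closure ((closedBall a ra \ closedBall b rb) ∪ (closedBall b rb \ closedBall a ra)) ⊆
      (closedBall a ra \ ball b rb) ∪ (closedBall b rb \ ball a ra) :=
  closure_minimal
    (union_subset_union (sdiff_subset_sdiff_right ball_subset_closedBall)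
      (sdiff_subset_sdiff_right ball_subset_closedBall))
    ((isClosed_closedBall.sdiff isOpen_ball).union (isClosed_closedBall.sdiff isOpen_ball))

end MetricSpace

section NormedSpace

variable {E : Type*} [NormedAddCommGroup E] [NormedSpace ℝ E] [Nontrivial E]

lemma mem_closure_closedBall_diff_closedBall {a b x : E} {ra rb : ℝ}
    (hxa : dist x a < ra) (hxb : dist x b = rb) :
    x ∈ closure (closedBall a ra \ closedBall b rb) := by
  have hx : x ∈ closure (closedBall b rb)ᶜ := by
    rw [closure_compl, interior_closedBall', mem_compl_iff, mem_ball, hxb]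
    exact lt_irrefl rb
  exact closure_mono (inter_subset_inter_left _ ball_subset_closedBall)
    (isOpen_ball.inter_closure ⟨mem_ball.mpr hxa, hx⟩)

end NormedSpace

section InnerProductSpace

variable {E : Type*} [NormedAddCommGroup E] [InnerProductSpace ℝ E]

lemma dist_sq_sub_dist_sq_eq (x p c : E) :
    dist x c ^ 2 - dist c p ^ 2 = ‖x‖ ^ 2 - ‖p‖ ^ 2 - 2 * ⟪x - p, c⟫ := by
  rw [dist_eq_norm, dist_eq_norm, norm_sub_sq_real, norm_sub_sq_real, inner_sub_left,
    real_inner_comm c p]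
  ring

lemma dist_sq_sub_dist_sq_convexComb (x p a b : E) {u v : ℝ} (huv : u + v = 1) :
    dist x (u • a + v • b) ^ 2 - dist (u • a + v • b) p ^ 2 =
      u * (dist x a ^ 2 - dist a p ^ 2) + v * (dist x b ^ 2 - dist b p ^ 2) := by
  simp only [dist_sq_sub_dist_sq_eq, inner_add_right, inner_smul_right]
  linear_combination -(‖x‖ ^ 2 - ‖p‖ ^ 2) * huv

lemma dist_sq_sub_dist_sq_eq_sub_inner (a b x y : E) :
    dist y b ^ 2 - dist y a ^ 2 = dist x b ^ 2 - dist x a ^ 2 - 2 * ⟪y - x, b - a⟫ := by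
  simp only [dist_eq_norm, norm_sub_sq_real, inner_sub_left, inner_sub_right]
  ring

lemma exists_mem_segment_dist_eq {a b p x : E} (hxa : dist x a ≤ dist a p)
    (hxb : dist b p ≤ dist x b) : ∃ r ∈ segment ℝ a b, dist x r = dist r p :=
  (convex_segment a b).isPreconnected.intermediate_value₂ (left_mem_segment ℝ a b)
    (right_mem_segment ℝ a b) (continuous_const.dist continuous_id).continuousOn
    (continuous_id.dist continuous_const).continuousOn hxa hxb

theorem iUnion_sphere_segment_eq (a b p : E) :
    (⋃ r ∈ segment ℝ a b, sphere r (dist r p)) =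
      (closedBall a (dist a p) \ ball b (dist b p)) ∪
        (closedBall b (dist b p) \ ball a (dist a p)) := by
  ext x
  simp only [mem_iUnion₂, exists_prop, mem_union, Set.mem_sdiff, mem_closedBall, mem_ball,
    not_lt, mem_sphere]
  constructor
  · rintro ⟨_, ⟨u, v, hu, hv, huv, rfl⟩, hx⟩
    have hsum := dist_sq_sub_dist_sq_convexComb x p a b huv
    rw [hx, sub_self] at hsum
    have hprod : (dist x a ^ 2 - dist a p ^ 2) * (dist x b ^ 2 - dist b p ^ 2) ≤ 0 := by
      nlinarith [mul_nonneg hu (sq_nonneg (dist x a ^ 2 - dist a p ^ 2)),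
        mul_nonneg hv (sq_nonneg (dist x b ^ 2 - dist b p ^ 2))]
    simp only [← sq_le_sq₀ dist_nonneg dist_nonneg]
    rcases mul_nonpos_iff.mp hprod with ⟨ha, hb⟩ | ⟨ha, hb⟩
    · exact Or.inr ⟨by linarith, by linarith⟩
    · exact Or.inl ⟨by linarith, by linarith⟩
  · rintro (⟨hxa, hxb⟩ | ⟨hxb, hxa⟩)
    · exact exists_mem_segment_dist_eq hxa hxb
    · rw [segment_symm]
      exact exists_mem_segment_dist_eq hxb hxa

/-- The rational parametrisation of the circle through `u` and `n` centred at `0`. -/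
lemma norm_add_smul_sub_smul_eq_norm {u n : E} (hun : ⟪u, n⟫ = 0) (hn : ‖n‖ = ‖u‖)
    (t : ℝ) :
    ‖u + (2 * t / (1 + t ^ 2)) • (n - t • u)‖ = ‖u‖ := by
  have : u + (2 * t / (1 + t ^ 2)) • (n - t • u) =
      (1 - 2 * t ^ 2 / (1 + t ^ 2)) • u + (2 * t / (1 + t ^ 2)) • n := by
    rw [smul_sub, smul_smul]
    module
  rw [← sq_eq_sq₀ (norm_nonneg _) (norm_nonneg _), this, norm_add_sq_real, norm_smul, norm_smul,
    inner_smul_left, inner_smul_right, hun, hn]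
  simp only [Real.norm_eq_abs, mul_pow, sq_abs]
  field_simp
  ring

section Plane

variable [Fact (finrank ℝ E = 2)]

attribute [local instance] FiniteDimensional.of_fact_finrank_eq_two

lemma exists_orthogonal_inner_nonpos (u d : E) :
    ∃ n : E, ⟪u, n⟫ = 0 ∧ ‖n‖ = ‖u‖ ∧ ⟪n, d⟫ ≤ 0 ∧
      ⟪n, d⟫ ^ 2 + ⟪u, d⟫ ^ 2 = ‖u‖ ^ 2 * ‖d‖ ^ 2 := by
  let o : Orientation ℝ E (Fin 2) := (finBasisOfFinrankEq ℝ E Fact.out).orientation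
  have hsq := o.inner_sq_add_areaForm_sq u d
  rw [← o.inner_rightAngleRotation_left] at hsq
  rcases le_total ⟪o.rightAngleRotation u, d⟫ 0 with h | h
  · exact ⟨o.rightAngleRotation u, by simp, by simp, h, by linarith⟩
  · refine ⟨-o.rightAngleRotation u, by simp, by simp, by simpa using h, ?_⟩
    rw [inner_neg_left, neg_sq]
    linarith

lemma mem_closure_sphere_inner_sub_neg {c x d : E} (hx : -(‖x - c‖ * ‖d‖) < ⟪x - c, d⟫) :
    x ∈ closure {y ∈ sphere c ‖x - c‖ | ⟪y - x, d⟫ < 0} := by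
  obtain ⟨n, hun, hn, hnd, hsq⟩ := exists_orthogonal_inner_nonpos (x - c) d
  have hev : ∀ᶠ t in 𝓝[>] (0 : ℝ), ⟪n, d⟫ - t * ⟪x - c, d⟫ < 0 := by
    rcases hnd.lt_or_eq with hnd | hnd
    · refine nhdsWithin_le_nhds (Tendsto.eventually_lt_const hnd ?_)
      exact Continuous.tendsto' (by fun_prop) _ _ (by simp)
    · have hpos : 0 < ⟪x - c, d⟫ := by
        nlinarith [mul_nonneg (norm_nonneg (x - c)) (norm_nonneg d)]
      filter_upwards [self_mem_nhdsWithin] with t ht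
      rw [hnd]
      nlinarith [mem_Ioi.mp ht]
  refine mem_closure_of_tendsto (b := 𝓝[>] 0)
    (f := fun t : ℝ => x + (2 * t / (1 + t ^ 2)) • (n - t • (x - c))) ?_ ?_
  · exact (Continuous.tendsto' (by fun_prop (disch := intro; positivity)) 0 x (by simp)).mono_left
      nhdsWithin_le_nhds
  · filter_upwards [hev, self_mem_nhdsWithin] with t ht ht0
    refine ⟨?_, ?_⟩
    · rw [mem_sphere, dist_eq_norm, add_sub_right_comm, norm_add_smul_sub_smul_eq_norm hun hn]
    · have : 0 < 2 * t / (1 + t ^ 2) := by have := mem_Ioi.mp ht0; positivity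
      rw [add_sub_cancel_left, inner_smul_left, inner_sub_left, inner_smul_left]
      simp only [RCLike.conj_to_real]
      nlinarith

lemma mem_closure_closedBall_diff_closedBall_of_inner {a b x : E}
    (h : -(‖x - a‖ * ‖b - a‖) < ⟪x - a, b - a⟫) :
    x ∈ closure (closedBall a (dist x a) \ closedBall b (dist x b)) := by
  refine closure_mono ?_ (mem_closure_sphere_inner_sub_neg h)
  rintro y ⟨hya, hyx⟩
  rw [← dist_eq_norm] at hya
  have hyb := dist_sq_sub_dist_sq_eq_sub_inner a b x y
  rw [mem_sphere.mp hya] at hyb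
  refine ⟨sphere_subset_closedBall hya, fun hyb' => ?_⟩
  have := pow_le_pow_left₀ dist_nonneg (mem_closedBall.mp hyb') 2
  linarith

lemma mem_closure_symmDiff_closedBall_dist {a b : E} (hab : a ≠ b) (x : E) :
    x ∈ closure ((closedBall a (dist x a) \ closedBall b (dist x b)) ∪
      (closedBall b (dist x b) \ closedBall a (dist x a))) := by
  by_cases ha : -(‖x - a‖ * ‖b - a‖) < ⟪x - a, b - a⟫
  · exact closure_mono subset_union_left (mem_closure_closedBall_diff_closedBall_of_inner ha)
  by_cases hb : -(‖x - b‖ * ‖a - b‖) < ⟪x - b, a - b⟫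
  · exact closure_mono subset_union_right (mem_closure_closedBall_diff_closedBall_of_inner hb)
  have hba : ⟪b - a, b - a⟫ = ⟪x - a, b - a⟫ + ⟪x - b, a - b⟫ := by
    rw [← neg_sub b a, inner_neg_right, ← sub_eq_add_neg, ← inner_sub_left,
      sub_sub_sub_cancel_left]
  rw [real_inner_self_eq_norm_sq] at hba
  rw [norm_sub_rev a b] at hb
  have : 0 < ‖b - a‖ := norm_pos_iff.mpr (sub_ne_zero.mpr hab.symm)
  nlinarith [norm_nonneg (x - a), norm_nonneg (x - b)]

lemma closedBall_diff_ball_subset_closure_symmDiff {a b : E} (hab : a ≠ b) (ra rb : ℝ) :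
    closedBall a ra \ ball b rb ⊆
      closure ((closedBall a ra \ closedBall b rb) ∪ (closedBall b rb \ closedBall a ra)) := by
  have : Nontrivial E := nontrivial_of_finrank_eq_succ (Fact.out : finrank ℝ E = 2)
  rintro x ⟨hxa, hxb⟩
  rw [mem_closedBall] at hxa
  rw [mem_ball, not_lt] at hxb
  rcases hxb.lt_or_eq with hxb | rfl
  · exact subset_closure
      (Or.inl ⟨mem_closedBall.mpr hxa, fun h => (mem_closedBall.mp h).not_gt hxb⟩)
  rcases hxa.lt_or_eq with hxa | rfl
  · exact closure_mono subset_union_left (mem_closure_closedBall_diff_closedBall hxa rfl)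
  · exact mem_closure_symmDiff_closedBall_dist hab x

theorem closure_symmDiff_closedBall {a b : E} (hab : a ≠ b) (ra rb : ℝ) :
    closure ((closedBall a ra \ closedBall b rb) ∪ (closedBall b rb \ closedBall a ra)) =
      (closedBall a ra \ ball b rb) ∪ (closedBall b rb \ ball a ra) := by
  refine (closure_symmDiff_closedBall_subset a b ra rb).antisymm
    (union_subset (closedBall_diff_ball_subset_closure_symmDiff hab ra rb) ?_)
  rw [union_comm]
  exact closedBall_diff_ball_subset_closure_symmDiff hab.symm rb ra

end Plane

end InnerProductSpace

theorem iUnion_circles_eq_closure_symmDiff_general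
    (a b p : EuclideanSpace ℝ (Fin 2))
    (hab : a ≠ b) :
    (⋃ r ∈ segment ℝ a b, Metric.sphere r (dist r p)) =
      closure ((Metric.closedBall a (dist a p) \ Metric.closedBall b (dist b p)) ∪
        (Metric.closedBall b (dist b p) \ Metric.closedBall a (dist a p))) := by
  rw [iUnion_sphere_segment_eq, closure_symmDiff_closedBall hab]

/-- Consequence of Lemma 1(ii): for distinct points `a`, `b` on the x-axis and
any point `p`, the union of the circles `C_p(r)` over `r` in the segment
`[a, b]` equals the closure of the symmetric difference of the closed disks
`D_p(a)` and `D_p(b)`. -/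
theorem iUnion_circles_eq_closure_symmDiff
    (a b p : EuclideanSpace ℝ (Fin 2))
    (ha : a 1 = 0) (hb : b 1 = 0) (hab : a ≠ b) :
    (⋃ r ∈ segment ℝ a b, Metric.sphere r (dist r p)) =
      closure ((Metric.closedBall a (dist a p) \ Metric.closedBall b (dist b p)) ∪
        (Metric.closedBall b (dist b p) \ Metric.closedBall a (dist a p))) :=
  iUnion_circles_eq_closure_symmDiff_general a b p hab
end

section
/- Let r and r' be points on the x-axis with r₁ < r'₁ (r strictly to the left of r'), and let p be any point of the plane. Then (C_p(r) ∩ D_p(r')) ∩ H_p^L = ∅, and D_p(r') ∩ H_p^L ⊆ D_p(r) ∩ H_p^L; equivalently, every point s with s₁ < p₁ and dist(r',s) ≤ dist(r',p) satisfies dist(r,s) < dist(r,p). -/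
/-- Corollary 1(i), left-halfplane part: for `r` strictly to the left of `r'`
on the x-axis, the circle `C_p(r)` avoids `D_p(r') ∩ H_p^L`, and
`D_p(r') ∩ H_p^L ⊆ D_p(r) ∩ H_p^L`; equivalently, every `s` with `s₁ < p₁`
and `dist r' s ≤ dist r' p` satisfies `dist r s < dist r p`. -/
theorem circle_disk_left_halfplane
    (r r' p : EuclideanSpace ℝ (Fin 2))
    (hr : r 1 = 0) (hr' : r' 1 = 0) (hlt : r 0 < r' 0) :
    (Metric.sphere r (dist r p) ∩ Metric.closedBall r' (dist r' p)) ∩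
        {s : EuclideanSpace ℝ (Fin 2) | s 0 < p 0} = ∅ ∧
    (Metric.closedBall r' (dist r' p) ∩ {s : EuclideanSpace ℝ (Fin 2) | s 0 < p 0}) ⊆
        (Metric.closedBall r (dist r p) ∩ {s : EuclideanSpace ℝ (Fin 2) | s 0 < p 0}) ∧
    ∀ s : EuclideanSpace ℝ (Fin 2),
      s 0 < p 0 → dist r' s ≤ dist r' p → dist r s < dist r p := by
  have e : ∀ (a b : EuclideanSpace ℝ (Fin 2)),
      (dist a b)^2 = (a 0 - b 0)^2 + (a 1 - b 1)^2 := by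
    intro a b
    rw [EuclideanSpace.dist_eq, Real.sq_sqrt (by positivity)]
    simp [Fin.sum_univ_two, Real.dist_eq, sq_abs]
  have key : ∀ s : EuclideanSpace ℝ (Fin 2),
      s 0 < p 0 → dist r' s ≤ dist r' p → dist r s < dist r p := by
    intro s hs h
    have h2 : (dist r' s)^2 ≤ (dist r' p)^2 := pow_le_pow_left₀ dist_nonneg h 2
    have h3 : (dist r s)^2 < (dist r p)^2 := by
      rw [e, e]; rw [e, e] at h2; simp only [hr, hr'] at *; nlinarith [h2, mul_pos (sub_pos.2 hlt) (sub_pos.2 hs)]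
    exact lt_of_pow_lt_pow_left₀ 2 dist_nonneg h3
  refine ⟨?_, ?_, key⟩
  · ext s
    simp only [Set.mem_inter_iff, Metric.mem_sphere, Metric.mem_closedBall,
      Set.mem_setOf_eq, Set.mem_empty_iff_false, iff_false]
    rintro ⟨⟨h1, h2⟩, h3⟩
    have := key s h3 (by rwa [dist_comm])
    rw [dist_comm r s, h1] at this
    exact lt_irrefl _ this
  · rintro s ⟨h1, h2⟩
    refine ⟨Metric.mem_closedBall.2 ?_, h2⟩
    rw [Metric.mem_closedBall, dist_comm s r'] at h1
    rw [dist_comm s r]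
    exact (key s h2 h1).le
end

section
/- Let r and r' be points on the x-axis with r₁ < r'₁ (r strictly to the left of r'), and let p be any point of the plane. Then (C_p(r') ∩ D_p(r)) ∩ H_p^R = ∅, and D_p(r) ∩ H_p^R ⊆ D_p(r') ∩ H_p^R; equivalently, every point s with s₁ > p₁ and dist(r,s) ≤ dist(r,p) satisfies dist(r',s) < dist(r',p). -/
lemma dist_sq_eq (a b : EuclideanSpace ℝ (Fin 2)) :
    dist a b ^ 2 = (a 0 - b 0) ^ 2 + (a 1 - b 1) ^ 2 := by
  rw [EuclideanSpace.dist_eq, Real.sq_sqrt (by positivity)]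
  simp [Fin.sum_univ_two, Real.dist_eq, sq_abs]

lemma key (r r' p : EuclideanSpace ℝ (Fin 2))
    (hr : r 1 = 0) (hr' : r' 1 = 0) (hlt : r 0 < r' 0) :
    ∀ s : EuclideanSpace ℝ (Fin 2),
      p 0 < s 0 → dist r s ≤ dist r p → dist r' s < dist r' p := by
  intro s hs hle
  have h1 : dist r s ^ 2 ≤ dist r p ^ 2 := by
    apply pow_le_pow_left₀ dist_nonneg hle
  rw [dist_sq_eq, dist_sq_eq, hr] at h1
  have h2 : dist r' s ^ 2 < dist r' p ^ 2 := by
    rw [dist_sq_eq, dist_sq_eq, hr']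
    nlinarith [h1, mul_pos (sub_pos.2 hlt) (sub_pos.2 hs)]
  exact lt_of_pow_lt_pow_left₀ 2 dist_nonneg h2

/-- Corollary 1(i), right-halfplane part: for `r` strictly to the left of `r'`
on the x-axis, the circle `C_p(r')` avoids `D_p(r) ∩ H_p^R`, and
`D_p(r) ∩ H_p^R ⊆ D_p(r') ∩ H_p^R`; equivalently, every `s` with `s₁ > p₁`
and `dist r s ≤ dist r p` satisfies `dist r' s < dist r' p`. -/
theorem circle_disk_right_halfplane
    (r r' p : EuclideanSpace ℝ (Fin 2))
    (hr : r 1 = 0) (hr' : r' 1 = 0) (hlt : r 0 < r' 0) :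
    (Metric.sphere r' (dist r' p) ∩ Metric.closedBall r (dist r p)) ∩
        {s : EuclideanSpace ℝ (Fin 2) | p 0 < s 0} = ∅ ∧
    (Metric.closedBall r (dist r p) ∩ {s : EuclideanSpace ℝ (Fin 2) | p 0 < s 0}) ⊆
        (Metric.closedBall r' (dist r' p) ∩ {s : EuclideanSpace ℝ (Fin 2) | p 0 < s 0}) ∧
    ∀ s : EuclideanSpace ℝ (Fin 2),
      p 0 < s 0 → dist r s ≤ dist r p → dist r' s < dist r' p := by
  have K := key r r' p hr hr' hlt
  refine ⟨?_, ?_, K⟩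
  · ext s
    simp only [Set.mem_inter_iff, Metric.mem_sphere, Metric.mem_closedBall,
      Set.mem_setOf_eq, Set.mem_empty_iff_false, iff_false]
    rintro ⟨⟨h1, h2⟩, h3⟩
    have := K s h3 (by rwa [dist_comm])
    rw [dist_comm r' s, h1] at this
    exact lt_irrefl _ this
  · rintro s ⟨h1, h2⟩
    refine ⟨?_, h2⟩
    rw [Metric.mem_closedBall, dist_comm]
    exact (K s h2 (by rwa [dist_comm, ← Metric.mem_closedBall])).le
end

section
/- Let a and b be points on the x-axis with a₁ ≤ b₁, let p be a point of the plane, and let r be a point of the segment [a,b]. Suppose a line segment I intersects the circle C_p(r) at two distinct points w₁ and w₂ such that the segment [w₁,w₂] lies entirely in the closure of D_p(a) \ D_p(b). Then I is tangent to some circle C_p(r') with r' ∈ [a,b], with the point of tangency on [w₁,w₂]; precisely, there exist a point r' ∈ [a,b] and a point z ∈ [w₁,w₂] such that I ∩ D_p(r') = {z}. -/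
open Set Metric AffineMap EuclideanGeometry
open scoped RealInnerProductSpace

/-!
The power `|X - c|² - |c - p|²` of a point `X` with respect to `C_p(c)` is affine in the center
`c`. Parametrise `I` by `u ↦ i₁ + u (i₂ - i₁)`, with `w₁, w₂` at `u₁ < u₂`, and move the center
from `r` towards `b` by `l (b - a)`: the power becomes `A (u - u₁) (u - u₂) + l h(u)` with
`A = |i₂ - i₁|²` and `h` affine. Since `[w₁, w₂]` lies in `D_p(a)` and outside the open disk
bounded by `C_p(b)`, `h ≥ 0` at `u₁, u₂` and the power for the center `b` is `≥ 0` on `[u₁, u₂]`.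
The minimum of this quadratic in `u` is negative at `l = 0`; as `l` grows its vertex leaves the
midpoint, and when the vertex reaches `u₁` or `u₂`, or the center reaches `b`, the minimum is
`≥ 0`. The intermediate value theorem gives an `l` for which the power is `A (u - w)²` with
`w ∈ [u₁, u₂]`: that circle meets `I` exactly in the point with parameter `w`.
-/

lemma quadratic_eq_mul_sub_mul_sub {A B C u₁ u₂ : ℝ} (hu : u₁ ≠ u₂)
    (h₁ : A * u₁ ^ 2 + B * u₁ + C = 0) (h₂ : A * u₂ ^ 2 + B * u₂ + C = 0) (u : ℝ) :
    A * u ^ 2 + B * u + C = A * (u - u₁) * (u - u₂) :=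
  mul_left_cancel₀ (sub_ne_zero.2 hu.symm) <| by
    linear_combination (u₂ - u) * h₁ + (u - u₁) * h₂

lemma exists_maximal_mul_abs_le {κ d L : ℝ} (hd : 0 ≤ d) (hL : 0 ≤ L) :
    ∃ l ∈ Icc 0 L, l * |κ| ≤ d ∧ (l = L ∨ l * |κ| = d) := by
  by_cases hκ : L * |κ| ≤ d
  · exact ⟨L, ⟨hL, le_rfl⟩, hκ, Or.inl rfl⟩
  push Not at hκ
  have hκ₀ : 0 < |κ| := abs_pos.2 fun h => by
    rw [h, abs_zero, mul_zero] at hκ; linarith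
  have hl : d / |κ| * |κ| = d := div_mul_cancel₀ _ hκ₀.ne'
  exact ⟨d / |κ|, ⟨div_nonneg hd hκ₀.le, le_of_mul_le_mul_right (hl.trans_lt hκ).le hκ₀⟩,
    hl.le, Or.inr hl⟩

theorem exists_quadratic_pencil_eq_mul_sq {A α β u₁ u₂ L : ℝ} (hA : 0 < A)
    (hu : u₁ < u₂) (h₁ : 0 ≤ α * u₁ + β) (h₂ : 0 ≤ α * u₂ + β)
    (hL : ∀ u ∈ Icc u₁ u₂, 0 ≤ A * (u - u₁) * (u - u₂) + L * (α * u + β)) :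
    ∃ l ∈ Icc 0 L, ∃ w ∈ Icc u₁ u₂,
      ∀ u, A * (u - u₁) * (u - u₂) + l * (α * u + β) = A * (u - w) ^ 2 := by
  set q : ℝ → ℝ → ℝ := fun l u => A * (u - u₁) * (u - u₂) + l * (α * u + β) with hq
  set c := (u₁ + u₂) / 2
  set d := (u₂ - u₁) / 2
  set κ := α / (2 * A)
  have hu₁ : u₁ = c - d := by ring
  have hu₂ : u₂ = c + d := by ring
  have hd : 0 < d := by linarith
  have hsq : ∀ l u, q l u = A * (u - (c - l * κ)) ^ 2 + q l (c - l * κ) := by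
    intro l u; simp only [hq, c, κ]; field_simp; ring
  have hq0 : q 0 c < 0 := by
    simp only [hq, zero_mul, add_zero]
    rw [hu₁, hu₂]
    nlinarith [mul_pos hA (mul_pos hd hd)]
  have hL₀ : 0 ≤ L := by
    have hc : 0 ≤ α * c + β := by
      linarith [show α * c + β = (α * u₁ + β + (α * u₂ + β)) / 2 by ring]
    have := hL c ⟨by linarith, by linarith⟩
    rw [hu₁, hu₂] at this
    nlinarith [mul_pos hA (mul_pos hd hd)]
  -- Move the vertex `c - l * κ` from `c` until it reaches `u₁` or `u₂`, or until `l = L`.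
  obtain ⟨l₁, hl₁, hl₁κ, hstop⟩ := exists_maximal_mul_abs_le (κ := κ) hd.le hL₀
  have hJ : ∀ l ∈ Icc 0 l₁, c - l * κ ∈ Icc u₁ u₂ := fun l hl => by
    have : |l * κ| ≤ d := by
      rw [abs_mul, abs_of_nonneg hl.1]
      exact (mul_le_mul_of_nonneg_right hl.2 (abs_nonneg κ)).trans hl₁κ
    rw [abs_le] at this
    constructor <;> linarith
  have hm₁ : 0 ≤ q l₁ (c - l₁ * κ) := by
    rcases hstop with rfl | hstop
    · exact hL _ (hJ l₁ ⟨hl₁.1, le_rfl⟩)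
    have hend : c - l₁ * κ = u₁ ∨ c - l₁ * κ = u₂ := by
      rcases abs_choice κ with h | h <;> rw [h] at hstop
      · left; linarith
      · right; linarith
    rcases hend with h | h <;> rw [h] <;> simp only [hq, sub_self, mul_zero, zero_mul, zero_add]
    · exact mul_nonneg hl₁.1 h₁
    · exact mul_nonneg hl₁.1 h₂
  obtain ⟨l, hl, hl0⟩ : ∃ l ∈ Icc 0 l₁, q l (c - l * κ) = 0 :=
    intermediate_value_Icc hl₁.1 (by simp only [hq]; fun_prop) ⟨by simpa using hq0.le, hm₁⟩
  exact ⟨l, ⟨hl.1, hl.2.trans hl₁.2⟩, c - l * κ, hJ l hl,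
    fun u => (hsq l u).trans (by rw [hl0, add_zero])⟩

section MetricSpace

variable {P : Type*} [MetricSpace P]

lemma closure_closedBall_sdiff_closedBall_subset {x y : P} {r s : ℝ} :
    closure (closedBall x r \ closedBall y s) ⊆ closedBall x r \ ball y s :=
  closure_minimal (sdiff_subset_sdiff_right ball_subset_closedBall)
    (isClosed_closedBall.sdiff isOpen_ball)

/-- The circle `C_p(c)`. -/
def sphereThrough (c p : P) : Sphere P := ⟨c, dist c p⟩

lemma mem_closedBall_iff_power_sphereThrough_nonpos {c p X : P} :
    X ∈ closedBall c (dist c p) ↔ (sphereThrough c p).power X ≤ 0 :=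
  (Sphere.power_nonpos_iff_dist_center_le_radius (s := sphereThrough c p) dist_nonneg).symm

lemma mem_sphere_iff_power_sphereThrough_eq_zero {c p X : P} :
    X ∈ Metric.sphere c (dist c p) ↔ (sphereThrough c p).power X = 0 :=
  (Sphere.power_eq_zero_iff_mem_sphere (s := sphereThrough c p) dist_nonneg).symm

lemma notMem_ball_iff_power_sphereThrough_nonneg {c p X : P} :
    X ∉ ball c (dist c p) ↔ 0 ≤ (sphereThrough c p).power X := by
  rw [mem_ball, not_lt]
  exact (Sphere.power_nonneg_iff_radius_le_dist_center (s := sphereThrough c p) dist_nonneg).symm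

end MetricSpace

section InnerProductSpace

variable {E : Type*} [NormedAddCommGroup E] [InnerProductSpace ℝ E]

lemma power_sphereThrough_sub (c c' p X : E) :
    (sphereThrough c' p).power X - (sphereThrough c p).power X = -2 * ⟪X - p, c' - c⟫ := by
  simp only [sphereThrough, Sphere.power, dist_eq_norm, norm_sub_sq_real, inner_sub_left,
    inner_sub_right, real_inner_comm p]
  ring

lemma power_sphereThrough_lineMap (c p x y : E) (u : ℝ) :
    (sphereThrough c p).power (lineMap x y u) =
      ‖y - x‖ ^ 2 * u ^ 2 + 2 * ⟪y - x, x - c⟫ * u + (sphereThrough c p).power x := by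
  simp only [sphereThrough, Sphere.power, dist_eq_norm, lineMap_apply_module',
    show u • (y - x) + x - c = u • (y - x) + (x - c) by abel, norm_add_sq_real, norm_smul,
    real_inner_smul_left, Real.norm_eq_abs, mul_pow, sq_abs]
  ring

lemma segment_inter_closedBall_eq_singleton {c p x y : E} {w : ℝ} (hxy : x ≠ y)
    (hw : w ∈ Icc 0 1)
    (h : ∀ u, (sphereThrough c p).power (lineMap x y u) = ‖y - x‖ ^ 2 * (u - w) ^ 2) :
    segment ℝ x y ∩ closedBall c (dist c p) = {lineMap x y w} := by
  have hA : 0 < ‖y - x‖ ^ 2 := pow_pos (norm_pos_iff.2 (sub_ne_zero.2 hxy.symm)) 2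
  ext X
  simp only [segment_eq_image_lineMap, mem_inter_iff, mem_image, mem_singleton_iff,
    mem_closedBall_iff_power_sphereThrough_nonpos]
  constructor
  · rintro ⟨⟨u, -, rfl⟩, hu⟩
    rw [h] at hu
    have : (u - w) ^ 2 = 0 := le_antisymm (nonpos_of_mul_nonpos_right hu hA) (sq_nonneg _)
    rw [sub_eq_zero.1 (pow_eq_zero_iff two_ne_zero |>.1 this)]
  · rintro rfl
    exact ⟨⟨w, hw, rfl⟩, by rw [h, sub_self]; simp⟩

theorem exists_power_sphereThrough_lineMap_eq_sq {a b p x y : E} {t u₁ u₂ : ℝ} (hxy : x ≠ y)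
    (hu : u₁ < u₂)
    (h₁ : (sphereThrough (lineMap a b t) p).power (lineMap x y u₁) = 0)
    (h₂ : (sphereThrough (lineMap a b t) p).power (lineMap x y u₂) = 0)
    (ha₁ : (sphereThrough a p).power (lineMap x y u₁) ≤ 0)
    (ha₂ : (sphereThrough a p).power (lineMap x y u₂) ≤ 0)
    (hb : ∀ u ∈ Icc u₁ u₂, 0 ≤ (sphereThrough b p).power (lineMap x y u)) :
    ∃ s ∈ Icc t 1, ∃ w ∈ Icc u₁ u₂, ∀ u,
      (sphereThrough (lineMap a b s) p).power (lineMap x y u) = ‖y - x‖ ^ 2 * (u - w) ^ 2 := by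
  set A := ‖y - x‖ ^ 2
  have hA : 0 < A := pow_pos (norm_pos_iff.2 (sub_ne_zero.2 hxy.symm)) 2
  set c := lineMap a b t
  set α := -2 * ⟪y - x, b - a⟫
  set β := -2 * ⟪x - p, b - a⟫
  have hdiff : ∀ u, (sphereThrough b p).power (lineMap x y u) -
      (sphereThrough a p).power (lineMap x y u) = α * u + β := by
    intro u
    rw [power_sphereThrough_sub, lineMap_apply_module', add_sub_assoc, inner_add_left,
      real_inner_smul_left]
    ring
  have hshift : ∀ l u, (sphereThrough (lineMap a b (t + l)) p).power (lineMap x y u) =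
      (sphereThrough c p).power (lineMap x y u) + l * (α * u + β) := by
    intro l u
    have hc : lineMap a b (t + l) - c = l • (b - a) := by
      simp only [c, lineMap_apply_module', add_smul]; abel
    have := power_sphereThrough_sub c (lineMap a b (t + l)) p (lineMap x y u)
    have hab := hdiff u
    rw [hc, real_inner_smul_right] at this
    rw [power_sphereThrough_sub] at hab
    linear_combination this + l * hab
  have hfactor :
      ∀ u, (sphereThrough c p).power (lineMap x y u) = A * (u - u₁) * (u - u₂) := by
    intro u
    simp only [power_sphereThrough_lineMap] at h₁ h₂ ⊢
    exact quadratic_eq_mul_sub_mul_sub hu.ne h₁ h₂ u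
  obtain ⟨l, hl, w, hw, hlw⟩ := exists_quadratic_pencil_eq_mul_sq (L := 1 - t) hA hu
    (by rw [← hdiff]; linarith [hb u₁ ⟨le_rfl, hu.le⟩])
    (by rw [← hdiff]; linarith [hb u₂ ⟨hu.le, le_rfl⟩])
    (fun u hu => by
      rw [← hfactor, ← hshift, add_sub_cancel, lineMap_apply_one]; exact hb u hu)
  exact ⟨t + l, ⟨by linarith [hl.1], by linarith [hl.2]⟩, w, hw, fun u => by
    rw [hshift, hfactor, hlw]⟩

end InnerProductSpace

theorem segment_tangent_circle_general
    (a b p r i₁ i₂ w₁ w₂ : EuclideanSpace ℝ (Fin 2))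
    (hr : r ∈ segment ℝ a b)
    (hw₁ : w₁ ∈ segment ℝ i₁ i₂ ∩ Metric.sphere r (dist r p))
    (hw₂ : w₂ ∈ segment ℝ i₁ i₂ ∩ Metric.sphere r (dist r p))
    (hww : w₁ ≠ w₂)
    (hseg : segment ℝ w₁ w₂ ⊆
      closure (Metric.closedBall a (dist a p) \ Metric.closedBall b (dist b p))) :
    ∃ r' ∈ segment ℝ a b, ∃ z ∈ segment ℝ w₁ w₂,
      segment ℝ i₁ i₂ ∩ Metric.closedBall r' (dist r' p) = {z} := by
  rw [segment_eq_image_lineMap] at hr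
  obtain ⟨t, ht, rfl⟩ := hr
  obtain ⟨hw₁I, hw₁C⟩ := hw₁
  obtain ⟨hw₂I, hw₂C⟩ := hw₂
  rw [segment_eq_image_lineMap] at hw₁I hw₂I
  obtain ⟨u₁, hu₁, rfl⟩ := hw₁I
  obtain ⟨u₂, hu₂, rfl⟩ := hw₂I
  wlog hu : u₁ < u₂ generalizing u₁ u₂
  · have hu' : u₂ < u₁ := lt_of_le_of_ne (not_lt.1 hu) fun h => hww (h ▸ rfl)
    rw [segment_symm ℝ (lineMap i₁ i₂ u₁)] at hseg ⊢
    exact this u₂ hu₂ hw₂C u₁ hu₁ hw₁C hww.symm hseg hu'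
  have hxy : i₁ ≠ i₂ := by rintro rfl; simp at hww
  have himage :
      lineMap i₁ i₂ '' Icc u₁ u₂ = segment ℝ (lineMap i₁ i₂ u₁) (lineMap i₁ i₂ u₂) := by
    rw [← segment_eq_Icc hu.le, image_segment]
  have hsub :
      ∀ u ∈ Icc u₁ u₂, lineMap i₁ i₂ u ∈ closedBall a (dist a p) \ ball b (dist b p) :=
    fun u hu => closure_closedBall_sdiff_closedBall_subset (hseg (himage ▸ mem_image_of_mem _ hu))
  obtain ⟨s, hs, w, hw, hpow⟩ := exists_power_sphereThrough_lineMap_eq_sq hxy hu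
    (mem_sphere_iff_power_sphereThrough_eq_zero.1 hw₁C)
    (mem_sphere_iff_power_sphereThrough_eq_zero.1 hw₂C)
    (mem_closedBall_iff_power_sphereThrough_nonpos.1 (hsub u₁ ⟨le_rfl, hu.le⟩).1)
    (mem_closedBall_iff_power_sphereThrough_nonpos.1 (hsub u₂ ⟨hu.le, le_rfl⟩).1)
    (fun u hu => notMem_ball_iff_power_sphereThrough_nonneg.1 (hsub u hu).2)
  refine ⟨lineMap a b s, ?_, lineMap i₁ i₂ w, himage ▸ mem_image_of_mem _ hw,
    segment_inter_closedBall_eq_singleton hxy ⟨hu₁.1.trans hw.1, hw.2.trans hu₂.2⟩ hpow⟩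
  rw [segment_eq_image_lineMap]
  exact ⟨s, ⟨ht.1.trans hs.1, hs.2⟩, rfl⟩

/-- Corollary 1(ii): if a line segment `I = [i₁, i₂]` meets the circle `C_p(r)`
(`r ∈ [a,b]`, `a`, `b` on the x-axis with `a₁ ≤ b₁`) at two distinct points
`w₁, w₂` such that `[w₁, w₂]` lies in the closure of `D_p(a) \ D_p(b)`, then
`I` is tangent to some circle `C_p(r')` with `r' ∈ [a,b]`, the tangency point
lying on `[w₁, w₂]`: there are `r' ∈ [a,b]` and `z ∈ [w₁, w₂]` with
`I ∩ D_p(r') = {z}`. -/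
theorem segment_tangent_circle
    (a b p r i₁ i₂ w₁ w₂ : EuclideanSpace ℝ (Fin 2))
    (ha : a 1 = 0) (hb : b 1 = 0) (hab : a 0 ≤ b 0)
    (hr : r ∈ segment ℝ a b)
    (hw₁ : w₁ ∈ segment ℝ i₁ i₂ ∩ Metric.sphere r (dist r p))
    (hw₂ : w₂ ∈ segment ℝ i₁ i₂ ∩ Metric.sphere r (dist r p))
    (hww : w₁ ≠ w₂)
    (hseg : segment ℝ w₁ w₂ ⊆
      closure (Metric.closedBall a (dist a p) \ Metric.closedBall b (dist b p))) :
    ∃ r' ∈ segment ℝ a b, ∃ z ∈ segment ℝ w₁ w₂,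
      segment ℝ i₁ i₂ ∩ Metric.closedBall r' (dist r' p) = {z} :=
  segment_tangent_circle_general a b p r i₁ i₂ w₁ w₂ hr hw₁ hw₂ hww hseg
end

section
/- Let a and b be points on the x-axis, let p be a point of the plane, and define a' = 2a − p and b' = 2b − p (so that a and b are the midpoints of the segments [p,a'] and [p,b'], respectively). Then for every point q on the closed segment [a',b'] with q ≠ p' (where p' = (p₁,−p₂) is the mirror image of p across the x-axis), the midpoint m of p and q lies on the segment [a,b], satisfies dist(m,p) = dist(m,q) (so that [q,p] is a diameter of the circle C_p(m)), and m is the unique point on the x-axis equidistant from p and q. -/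
/-!
The homothety with centre `p` and ratio `1/2` maps `a' = 2a - p`, `b' = 2b - p` to `a`, `b`,
hence `[a', b']` onto `[a, b]`, and it sends `q` to the midpoint `m`. Since `a'` and `b'` have
second coordinate `-p₁`, so does `q`; thus `m` lies on the x-axis, and `q ≠ p'` means that
`q - p` has nonzero first coordinate. The points equidistant from `p` and `q` form the
perpendicular bisector, the line through `m` orthogonal to `q - p`, which is therefore not
horizontal and meets the x-axis only at `m`.
-/

open AffineMap

theorem midpoint_mem_segment_of_mem_segment_two_smul_sub {𝕜 E : Type*} [Field 𝕜]
    [LinearOrder 𝕜] [IsStrictOrderedRing 𝕜] [AddCommGroup E] [Module 𝕜 E] {a b p q : E}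
    (hq : q ∈ segment 𝕜 ((2 : 𝕜) • a - p) ((2 : 𝕜) • b - p)) :
    midpoint 𝕜 p q ∈ segment 𝕜 a b := by
  have homothety_two_smul_sub (x : E) : homothety p (⅟2 : 𝕜) ((2 : 𝕜) • x - p) = x := by
    rw [homothety_invOf_two, midpoint_eq_smul_add, add_sub_cancel, smul_smul, invOf_mul_self,
      one_smul]
  rw [← homothety_two_smul_sub a, ← homothety_two_smul_sub b, ← image_segment,
    ← homothety_invOf_two]
  exact Set.mem_image_of_mem _ hq

theorem LinearMap.apply_eq_of_mem_segment {𝕜 E F : Type*} [Field 𝕜] [LinearOrder 𝕜]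
    [IsStrictOrderedRing 𝕜] [AddCommGroup E] [Module 𝕜 E] [AddCommGroup F] [Module 𝕜 F]
    (f : E →ₗ[𝕜] F) {x y z : E} {r : F} (hx : f x = r) (hy : f y = r)
    (hz : z ∈ segment 𝕜 x y) : f z = r := by
  have := image_segment 𝕜 f.toAffineMap x y ▸ Set.mem_image_of_mem f.toAffineMap hz
  simpa [hx, hy] using this

namespace EuclideanSpace

theorem midpoint_apply {ι : Type*} (p q : EuclideanSpace ℝ ι) (i : ι) :
    midpoint ℝ p q i = (p i + q i) / 2 := by
  rw [midpoint_eq_smul_add]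
  simp only [PiLp.smul_apply, PiLp.add_apply, invOf_eq_inv, smul_eq_mul]
  ring

theorem eq_midpoint_of_dist_eq_of_apply_one_eq_zero {c p q : EuclideanSpace ℝ (Fin 2)}
    (hq1 : q 1 = -p 1) (hq0 : q 0 ≠ p 0) (hc : c 1 = 0) (hcd : dist c p = dist c q) :
    c = midpoint ℝ p q := by
  rw [← AffineSubspace.mem_perpBisector_iff_dist_eq,
    AffineSubspace.mem_perpBisector_iff_inner_eq_zero] at hcd
  have horth : (q 0 - p 0) * (c 0 - (p 0 + q 0) / 2) = 0 := by
    simpa [inner_eq_star_dotProduct, dotProduct, Fin.sum_univ_two, midpoint_apply, hc, hq1]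
      using hcd
  have hc0 : c 0 = (p 0 + q 0) / 2 :=
    sub_eq_zero.mp ((mul_eq_zero.mp horth).resolve_left (sub_ne_zero.mpr hq0))
  ext i
  fin_cases i
  · simp [midpoint_apply, hc0]
  · simp [midpoint_apply, hc, hq1]

end EuclideanSpace

/-- Lemma 2(ii): for `a`, `b` on the x-axis, `a' = 2a − p`, `b' = 2b − p`, and
any `q ∈ [a', b']` with `q ≠ p'` (the mirror image of `p`), the midpoint `m`
of `p` and `q` lies on `[a, b]`, is equidistant from `p` and `q` (so `[q, p]`
is a diameter of `C_p(m)`), and is the unique point of the x-axis equidistant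
from `p` and `q`. -/
theorem midpoint_is_unique_axis_center
    (a b p p' q : EuclideanSpace ℝ (Fin 2))
    (ha : a 1 = 0) (hb : b 1 = 0)
    (hp'0 : p' 0 = p 0) (hp'1 : p' 1 = -(p 1))
    (hq : q ∈ segment ℝ ((2 : ℝ) • a - p) ((2 : ℝ) • b - p)) (hqp' : q ≠ p') :
    midpoint ℝ p q ∈ segment ℝ a b ∧
    dist (midpoint ℝ p q) p = dist (midpoint ℝ p q) q ∧
    ∀ c : EuclideanSpace ℝ (Fin 2),
      c 1 = 0 → dist c p = dist c q → c = midpoint ℝ p q := by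
  have hq1 : q 1 = -p 1 :=
    (EuclideanSpace.proj (1 : Fin 2) : EuclideanSpace ℝ (Fin 2) →L[ℝ] ℝ).toLinearMap
      |>.apply_eq_of_mem_segment (by simp [ha]) (by simp [hb]) hq
  have hq0 : q 0 ≠ p 0 := fun hq0 => hqp' <| by
    ext i
    fin_cases i
    · simp [hq0, hp'0]
    · simp [hq1, hp'1]
  exact ⟨midpoint_mem_segment_of_mem_segment_two_smul_sub hq,
    by rw [dist_midpoint_left, dist_midpoint_right],
    fun c hc hcd => EuclideanSpace.eq_midpoint_of_dist_eq_of_apply_one_eq_zero hq1 hq0 hc hcd⟩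
end

section
/- Let p be a point of the plane with p₂ ≥ 0, let t be a point on the x-axis, and let w be a point with dist(t,w) = dist(t,p) and w ≠ p' (where p' = (p₁,−p₂) is the mirror image of p across the x-axis). If either (w₁ ≤ p₁ and w₂ ≥ −p₂) or (w₁ ≥ p₁ and w₂ ≤ −p₂), then the cross product (p − t) × (w − t) = (p₁ − t₁)·w₂ − p₂·(w₁ − t₁) is nonnegative; equivalently, the counterclockwise angle swept from the ray from t through p to the ray from t through w lies in [0, π]. -/
/-! Put `u = p - t = (a, b)`, `v = w - t = (x, y)`, `d = a - x`, `e = y + b`. The regions `R₁`, `R₄`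
are exactly where `d` and `e` have the same weak sign, and `w ≠ p'` says they are not both zero,
so `d + e ≠ 0`. As `|u| = |v|`, the numbers `A = |u + v|² / 2 = |u|² + u·v` and
`B = |u - v|² / 2 = |u|² - u·v` are nonnegative and `(u × v)(d + e) = d A + e B`; hence
`(u × v)(d + e)² = d² A + e² B + d e (A + B) ≥ 0`. -/

lemma cross_mul_eq_of_sq_add_sq_eq {a b x y : ℝ} (hr : x ^ 2 + y ^ 2 = a ^ 2 + b ^ 2) :
    (a * y - b * x) * ((a - x) + (y + b)) =
      (a - x) * (((a + x) ^ 2 + (b + y) ^ 2) / 2) +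
        (y + b) * (((a - x) ^ 2 + (b - y) ^ 2) / 2) := by
  linear_combination (a + b + x - y) * hr / 2

lemma cross_nonneg_of_mul_nonneg {a b x y : ℝ} (hr : x ^ 2 + y ^ 2 = a ^ 2 + b ^ 2)
    (hsign : 0 ≤ (a - x) * (y + b)) (hne : x ≠ a ∨ y ≠ -b) :
    0 ≤ a * y - b * x := by
  set A := ((a + x) ^ 2 + (b + y) ^ 2) / 2
  set B := ((a - x) ^ 2 + (b - y) ^ 2) / 2
  have hsum : (a - x) + (y + b) ≠ 0 := by
    intro h
    have : (a - x) * (y + b) = -(a - x) ^ 2 := by rw [eq_neg_of_add_eq_zero_right h]; ring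
    have hx : a - x = 0 := by nlinarith [sq_nonneg (a - x)]
    rcases hne with hne | hne
    · exact hne (by linarith)
    · exact hne (by linarith)
  have hprod : 0 ≤ (a * y - b * x) * ((a - x) + (y + b)) ^ 2 := by
    have hexp : (a * y - b * x) * ((a - x) + (y + b)) ^ 2 =
        (a - x) ^ 2 * A + (y + b) ^ 2 * B + (a - x) * (y + b) * (A + B) := by
      rw [sq ((a - x) + (y + b)), ← mul_assoc, cross_mul_eq_of_sq_add_sq_eq hr]; ring
    rw [hexp]
    positivity
  exact nonneg_of_mul_nonneg_left hprod (sq_pos_of_ne_zero hsum)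

theorem cross_nonneg_regions_R1_R4_general
    (p p' t w : EuclideanSpace ℝ (Fin 2))
    (ht : t 1 = 0)
    (hw : dist t w = dist t p)
    (hp'0 : p' 0 = p 0) (hp'1 : p' 1 = -(p 1)) (hwp' : w ≠ p')
    (hreg : (w 0 ≤ p 0 ∧ -(p 1) ≤ w 1) ∨ (p 0 ≤ w 0 ∧ w 1 ≤ -(p 1))) :
    0 ≤ (p 0 - t 0) * w 1 - p 1 * (w 0 - t 0) := by
  have hr : (w 0 - t 0) ^ 2 + w 1 ^ 2 = (p 0 - t 0) ^ 2 + p 1 ^ 2 := by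
    have h := congrArg (· ^ 2) hw
    simp only [EuclideanSpace.dist_sq_eq, Fin.sum_univ_two, Real.dist_eq, sq_abs, ht] at h
    linear_combination h
  have hne : w 0 - t 0 ≠ p 0 - t 0 ∨ w 1 ≠ -(p 1) := by
    by_contra! h
    refine hwp' (PiLp.ext fun i => ?_)
    fin_cases i
    · simpa [hp'0] using h.1
    · simpa [hp'1] using h.2
  refine cross_nonneg_of_mul_nonneg hr ?_ hne
  rcases hreg with ⟨hx, hy⟩ | ⟨hx, hy⟩
  · exact mul_nonneg (by linarith) (by linarith)
  · exact mul_nonneg_of_nonpos_of_nonpos (by linarith) (by linarith)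

/-- Key claim (regions R₁ and R₄) in the proof of Theorem 4(ii): for `p` on or
above the x-axis, `t` on the x-axis, and `w` on the circle centered at `t`
through `p` with `w ≠ p'`, if `w` lies in region `R₁` or `R₄`, then the cross
product `(p − t) × (w − t)` is nonnegative, i.e. the counterclockwise angle
from the ray `t→p` to the ray `t→w` lies in `[0, π]`. -/
theorem cross_nonneg_regions_R1_R4
    (p p' t w : EuclideanSpace ℝ (Fin 2))
    (hp : 0 ≤ p 1) (ht : t 1 = 0)
    (hw : dist t w = dist t p)
    (hp'0 : p' 0 = p 0) (hp'1 : p' 1 = -(p 1)) (hwp' : w ≠ p')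
    (hreg : (w 0 ≤ p 0 ∧ -(p 1) ≤ w 1) ∨ (p 0 ≤ w 0 ∧ w 1 ≤ -(p 1))) :
    0 ≤ (p 0 - t 0) * w 1 - p 1 * (w 0 - t 0) :=
  cross_nonneg_regions_R1_R4_general p p' t w ht hw hp'0 hp'1 hwp' hreg
end

section
/- Let p be a point of the plane with p₂ ≥ 0, let t be a point on the x-axis, and let w be a point with dist(t,w) = dist(t,p) and w ≠ p' (where p' = (p₁,−p₂) is the mirror image of p across the x-axis). If either (w₁ ≥ p₁ and w₂ ≥ −p₂) or (w₁ ≤ p₁ and w₂ ≤ −p₂), then the cross product (p − t) × (w − t) = (p₁ − t₁)·w₂ − p₂·(w₁ − t₁) is nonpositive; equivalently, the counterclockwise angle swept from the ray from t through p to the ray from t through w lies in [π, 2π]. -/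
theorem aux2 (a b c d : ℝ) (hb : 0 ≤ b) (hkey : c^2 + d^2 = a^2 + b^2)
    (hne : c ≠ a ∨ d ≠ -b) (h1 : a ≤ c) (h2 : -b ≤ d) : a*d - b*c ≤ 0 := by
  have hr : 0 ≤ c - a := by linarith
  have hs : 0 ≤ d + b := by linarith
  rcases eq_or_lt_of_le hr with h' | h'
  · have hc : c = a := by linarith
    have hdb : (d - b) * (d + b) = 0 := by linear_combination hkey - (c + a) * hc
    have hd : d = b := by
      rcases mul_eq_zero.mp hdb with h'' | h''
      · linarith
      · rcases hne with h3 | h3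
        · exact absurd hc h3
        · exact absurd (by linarith : d = -b) h3
    rw [hc, hd]; linarith [mul_comm a b]
  · have id2 : 2*(c-a)*(b*c-a*d) =
        (d+b)*(c-a)^2 + (d+b)*(d-b)^2 + (d-b)*(a^2+b^2-c^2-d^2) := by ring
    have hE : a^2+b^2-c^2-d^2 = 0 := by linarith
    have h3 : 0 ≤ 2*(c-a)*(b*c-a*d) := by
      rw [id2, hE]
      nlinarith [mul_nonneg hs (sq_nonneg (c-a)), mul_nonneg hs (sq_nonneg (d-b))]
    nlinarith [h3, h']

theorem aux3 (a b c d : ℝ) (hb : 0 ≤ b) (hkey : c^2 + d^2 = a^2 + b^2)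
    (hne : c ≠ a ∨ d ≠ -b) (h1 : c ≤ a) (h2 : d ≤ -b) : a*d - b*c ≤ 0 := by
  have hr : 0 ≤ a - c := by linarith
  have hs : 0 ≤ -b - d := by linarith
  rcases eq_or_lt_of_le hs with h' | h'
  · have hd : d = -b := by linarith
    have hca : (a - c) * (a + c) = 0 := by linear_combination -hkey + (d - b) * hd
    have hc : c = -a := by
      rcases mul_eq_zero.mp hca with h'' | h''
      · rcases hne with h3 | h3
        · exact absurd (by linarith : c = a) h3
        · exact absurd hd h3
      · linarith
    rw [hc, hd]; linarith [mul_comm a b]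
  · have id3 : 2*(-b-d)*(b*c-a*d) =
        (a-c)*(-b-d)^2 + (a-c)*(a+c)^2 + (-(a+c))*(a^2+b^2-c^2-d^2) := by ring
    have hE : a^2+b^2-c^2-d^2 = 0 := by linarith
    have h3 : 0 ≤ 2*(-b-d)*(b*c-a*d) := by
      rw [id3, hE]
      nlinarith [mul_nonneg hr (sq_nonneg (-b-d)), mul_nonneg hr (sq_nonneg (a+c))]
    nlinarith [h3, h']

/-- Key claim (regions R₂ and R₃) in the proof of Theorem 4(ii): for `p` on or
above the x-axis, `t` on the x-axis, and `w` on the circle centered at `t`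
through `p` with `w ≠ p'`, if `w` lies in region `R₂` or `R₃`, then the cross
product `(p − t) × (w − t)` is nonpositive, i.e. the counterclockwise angle
from the ray `t→p` to the ray `t→w` lies in `[π, 2π]`. -/
theorem cross_nonpos_regions_R2_R3
    (p p' t w : EuclideanSpace ℝ (Fin 2))
    (hp : 0 ≤ p 1) (ht : t 1 = 0)
    (hw : dist t w = dist t p)
    (hp'0 : p' 0 = p 0) (hp'1 : p' 1 = -(p 1)) (hwp' : w ≠ p')
    (hreg : (p 0 ≤ w 0 ∧ -(p 1) ≤ w 1) ∨ (w 0 ≤ p 0 ∧ w 1 ≤ -(p 1))) :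
    (p 0 - t 0) * w 1 - p 1 * (w 0 - t 0) ≤ 0 := by
  have hkey : (w 0 - t 0)^2 + (w 1)^2 = (p 0 - t 0)^2 + (p 1)^2 := by
    have h1 := hw
    rw [EuclideanSpace.dist_eq, EuclideanSpace.dist_eq] at h1
    simp only [Real.dist_eq] at h1
    have h2 : (∑ i, |t i - w i|^2) = (∑ i, |t i - p i|^2) :=
      (Real.sqrt_inj (by positivity) (by positivity)).mp h1
    rw [Fin.sum_univ_two, Fin.sum_univ_two, ht] at h2
    simp only [sq_abs] at h2
    nlinarith [h2]
  have hne : w 0 - t 0 ≠ p 0 - t 0 ∨ w 1 ≠ -(p 1) := by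
    by_contra h
    push_neg at h
    apply hwp'
    ext i
    fin_cases i
    · simpa [hp'0] using (by linarith [h.1] : w 0 = p 0)
    · simpa [hp'1] using h.2
  rcases hreg with ⟨h1, h2⟩ | ⟨h1, h2⟩
  · exact aux2 (p 0 - t 0) (p 1) (w 0 - t 0) (w 1) hp hkey hne (by linarith) h2
  · exact aux3 (p 0 - t 0) (p 1) (w 0 - t 0) (w 1) hp hkey hne (by linarith) h2
end

section
/- Let γ₁, γ₂, δ₁, δ₂, ε₁, ε₂ be real polynomials and let x be a real number such that ε₁(x) ≠ 0, ε₂(x) ≠ 0, δ₁(x) ≥ 0, δ₂(x) ≥ 0, and (γ₁(x) + s₁·√δ₁(x))/ε₁(x) = (γ₂(x) + s₂·√δ₂(x))/ε₂(x) for some signs s₁, s₂ ∈ {−1, +1}. Then x is a root of the polynomial P = ((γ₁·ε₂ − γ₂·ε₁)² − ε₂²·δ₁ − ε₁²·δ₂)² − 4·ε₁²·ε₂²·δ₁·δ₂. Moreover, if γ₁ and γ₂ have degree at most 2, δ₁ and δ₂ have degree at most 4, and ε₁ and ε₂ have degree at most 2, then P has degree at most 16. -/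
open Polynomial

set_option maxHeartbeats 1600000 in
/-- The squaring argument in the lemma of Section 3: if
`(γ₁(x) + s₁√δ₁(x))/ε₁(x) = (γ₂(x) + s₂√δ₂(x))/ε₂(x)` with signs `s₁, s₂`,
then `x` is a root of
`P = ((γ₁ε₂ − γ₂ε₁)² − ε₂²δ₁ − ε₁²δ₂)² − 4ε₁²ε₂²δ₁δ₂`; moreover, under the
stated degree bounds, `P` has degree at most `16`. -/
theorem root_of_resultant_poly
    (γ₁ γ₂ δ₁ δ₂ ε₁ ε₂ : Polynomial ℝ) (x : ℝ) (s₁ s₂ : ℝ)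
    (hs₁ : s₁ = 1 ∨ s₁ = -1) (hs₂ : s₂ = 1 ∨ s₂ = -1)
    (hε₁ : ε₁.eval x ≠ 0) (hε₂ : ε₂.eval x ≠ 0)
    (hδ₁ : 0 ≤ δ₁.eval x) (hδ₂ : 0 ≤ δ₂.eval x)
    (heq : (γ₁.eval x + s₁ * Real.sqrt (δ₁.eval x)) / ε₁.eval x =
           (γ₂.eval x + s₂ * Real.sqrt (δ₂.eval x)) / ε₂.eval x) :
    (((γ₁ * ε₂ - γ₂ * ε₁) ^ 2 - ε₂ ^ 2 * δ₁ - ε₁ ^ 2 * δ₂) ^ 2 -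
        4 * ε₁ ^ 2 * ε₂ ^ 2 * δ₁ * δ₂).IsRoot x ∧
    (γ₁.natDegree ≤ 2 → γ₂.natDegree ≤ 2 → δ₁.natDegree ≤ 4 → δ₂.natDegree ≤ 4 →
      ε₁.natDegree ≤ 2 → ε₂.natDegree ≤ 2 →
      (((γ₁ * ε₂ - γ₂ * ε₁) ^ 2 - ε₂ ^ 2 * δ₁ - ε₁ ^ 2 * δ₂) ^ 2 -
        4 * ε₁ ^ 2 * ε₂ ^ 2 * δ₁ * δ₂).natDegree ≤ 16) := by
  constructor
  · set a := γ₁.eval x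
    set b := γ₂.eval x
    set e₁ := ε₁.eval x
    set e₂ := ε₂.eval x
    set u := Real.sqrt (δ₁.eval x) with hu
    set v := Real.sqrt (δ₂.eval x) with hv
    have hu2 : u ^ 2 = δ₁.eval x := Real.sq_sqrt hδ₁
    have hv2 : v ^ 2 = δ₂.eval x := Real.sq_sqrt hδ₂
    have hcross : (a + s₁ * u) * e₂ = (b + s₂ * v) * e₁ := by
      field_simp at heq
      linarith [heq]
    have hs₁' : s₁ ^ 2 = 1 := by rcases hs₁ with h | h <;> rw [h] <;> ring
    have hs₂' : s₂ ^ 2 = 1 := by rcases hs₂ with h | h <;> rw [h] <;> ring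
    have hk : a * e₂ - b * e₁ = s₂ * v * e₁ - s₁ * u * e₂ := by
      linear_combination hcross
    simp only [IsRoot, eval_sub, eval_mul, eval_pow, eval_ofNat]
    rw [← hu2, ← hv2]
    show ((a * e₂ - b * e₁) ^ 2 - e₂ ^ 2 * u ^ 2 - e₁ ^ 2 * v ^ 2) ^ 2 -
        4 * e₁ ^ 2 * e₂ ^ 2 * u ^ 2 * v ^ 2 = 0
    rw [hk]
    rcases hs₁ with h | h <;> rcases hs₂ with h' | h' <;> subst h <;> subst h' <;> ring
  · intro h1 h2 h3 h4 h5 h6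
    compute_degree
    all_goals omega
end
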